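/- Near the origin the rotated subsolution matches U to order 2α: for v_R(x,z) = V_R(R − √(|x'|²+(x_n−R)²), z), there exists C such that |v_R(x,z) − U(x_n,z)| ≤ C s^{2α} for all (x,z) ∈ B_s with s small, so v_R(x,z) = U(x_n,z) + o(|(x,z)|^α) as (x,z) → 0. -/

import Mathlib

/-!
Put `ρ = √(|x'|² + (x_n - R)²)` and `t = R - ρ`, so that `v_R(x, z) = V_R(t, z)`. Since
`R - ρ - x_n = -|x'|² / (R - x_n + ρ)` and the denominator is at least `1` near the origin,
`|t - x_n| ≤ |x'|² < s²`. Writing `w = t + z i`, `U(t, z) = ((|w| + Re w) / 2) ^ α` is the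
`α`-th power of a function that is `1`-Lipschitz in `t`, hence `α`-Hölder in `t`, which gives
`|U(t, z) - U(x_n, z)| ≤ s^{2α}`. Finally `|V_R(t, z) - U(t, z)| ≤ (n - 1)(|t| / R) U(t, z)`
is `O(s · s^α)`, and `s^{1+α} ≤ s^{2α}` for `s ≤ 1`.
-/

noncomputable def hh (t z : ℝ) : ℝ :=
  Real.sqrt (Real.sqrt (t ^ 2 + z ^ 2)) * Real.cos (Complex.arg (t + z * Complex.I) / 2)

noncomputable def UU (α t z : ℝ) : ℝ := hh t z ^ (2 * α)

noncomputable def VV (α : ℝ) (n : ℕ) (R t z : ℝ) : ℝ :=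
  UU α t z * (((n : ℝ) - 1) * t / R + 1)

/-- `v_R(X) = V_R(R - √(|x'|² + (x_n - R)²), z)` with `X = (x', x_n, z)`. -/
noncomputable def vR (α : ℝ) (m : ℕ) (R : ℝ) (p : (Fin m → ℝ) × ℝ × ℝ) : ℝ :=
  VV α (m + 1) R (R - Real.sqrt ((∑ i, p.1 i ^ 2) + (p.2.1 - R) ^ 2)) p.2.2

open Complex

-- `r cos² (θ / 2)` for `w = r e^{iθ}`, i.e. `hh t z ^ 2` at `w = t + z i`.
noncomputable def halfNormAddRe (w : ℂ) : ℝ := (‖w‖ + w.re) / 2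

lemma halfNormAddRe_nonneg (w : ℂ) : 0 ≤ halfNormAddRe w := by
  have := neg_abs_le w.re
  have := abs_re_le_norm w
  unfold halfNormAddRe
  linarith

lemma halfNormAddRe_le_norm (w : ℂ) : halfNormAddRe w ≤ ‖w‖ := by
  have := re_le_norm w
  unfold halfNormAddRe
  linarith

lemma abs_halfNormAddRe_sub_le (w w' : ℂ) :
    |halfNormAddRe w - halfNormAddRe w'| ≤ ‖w - w'‖ := by
  have hnorm := abs_norm_sub_norm_le w w'
  have hre : |w.re - w'.re| ≤ ‖w - w'‖ := by
    simpa only [sub_re] using abs_re_le_norm (w - w')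
  unfold halfNormAddRe
  rw [abs_le] at hnorm hre ⊢
  constructor <;> linarith

lemma hh_eq_sqrt (t z : ℝ) : hh t z = √(halfNormAddRe (t + z * I)) := by
  have harg := Real.cos_half (neg_pi_lt_arg (t + z * I)).le (arg_le_pi (t + z * I))
  rw [hh, ← norm_add_mul_I, harg, ← Real.sqrt_mul (norm_nonneg _), halfNormAddRe,
    ← norm_mul_cos_arg]
  ring_nf

lemma UU_eq_rpow (α t z : ℝ) : UU α t z = halfNormAddRe (t + z * I) ^ α := by
  rw [UU, hh_eq_sqrt, Real.sqrt_eq_rpow, ← Real.rpow_mul (halfNormAddRe_nonneg _)]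
  ring_nf

lemma UU_nonneg (α t z : ℝ) : 0 ≤ UU α t z := by
  rw [UU_eq_rpow]
  exact Real.rpow_nonneg (halfNormAddRe_nonneg _) α

lemma UU_le_rpow_abs_add_abs {α : ℝ} (hα : 0 ≤ α) (t z : ℝ) :
    UU α t z ≤ (|t| + |z|) ^ α := by
  have hnorm : ‖(t + z * I : ℂ)‖ ≤ |t| + |z| := by
    simpa using norm_add_le (t : ℂ) (z * I)
  rw [UU_eq_rpow]
  exact Real.rpow_le_rpow (halfNormAddRe_nonneg _) ((halfNormAddRe_le_norm _).trans hnorm) hα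

lemma Real.abs_rpow_sub_rpow_le {a b p : ℝ} (ha : 0 ≤ a) (hb : 0 ≤ b) (hp₀ : 0 ≤ p)
    (hp₁ : p ≤ 1) :
    |a ^ p - b ^ p| ≤ |a - b| ^ p := by
  wlog hba : b ≤ a generalizing a b
  · rw [abs_sub_comm, abs_sub_comm a]
    exact this hb ha (le_of_not_ge hba)
  have hmono : b ^ p ≤ a ^ p := Real.rpow_le_rpow hb hba hp₀
  have hsub : a ^ p ≤ (a - b) ^ p + b ^ p := by
    simpa using Real.rpow_add_le_add_rpow (sub_nonneg.2 hba) hb hp₀ hp₁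
  rw [abs_of_nonneg (sub_nonneg.2 hmono), abs_of_nonneg (sub_nonneg.2 hba)]
  linarith

lemma abs_UU_sub_UU_le {α : ℝ} (hα₀ : 0 ≤ α) (hα₁ : α ≤ 1) (t x z : ℝ) :
    |UU α t z - UU α x z| ≤ |t - x| ^ α := by
  have hlip : |halfNormAddRe (t + z * I) - halfNormAddRe (x + z * I)| ≤ |t - x| := by
    simpa [← ofReal_sub] using abs_halfNormAddRe_sub_le (t + z * I) (x + z * I)
  rw [UU_eq_rpow, UU_eq_rpow]
  calc _ ≤ |halfNormAddRe (t + z * I) - halfNormAddRe (x + z * I)| ^ α :=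
        Real.abs_rpow_sub_rpow_le (halfNormAddRe_nonneg _) (halfNormAddRe_nonneg _) hα₀ hα₁
    _ ≤ |t - x| ^ α := Real.rpow_le_rpow (abs_nonneg _) hlip hα₀

lemma abs_VV_sub_UU (α : ℝ) (n : ℕ) (R t z : ℝ) :
    |VV α n R t z - UU α t z| = |((n : ℝ) - 1) * t / R| * UU α t z := by
  have : VV α n R t z - UU α t z = ((n : ℝ) - 1) * t / R * UU α t z := by
    rw [VV]
    ring
  rw [this, abs_mul, abs_of_nonneg (UU_nonneg α t z)]

lemma abs_VV_sub_UU_le {α R s t z : ℝ} (n : ℕ) (hα₀ : 0 ≤ α) (hα₁ : α ≤ 1) (hR : 1 ≤ R)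
    (hs₁ : s ≤ 1) (ht : |t| ≤ 2 * s) (hz : |z| ≤ s) :
    |VV α n R t z - UU α t z| ≤ 6 * |(n : ℝ) - 1| * s ^ (2 * α) := by
  have hs : 0 ≤ s := (abs_nonneg z).trans hz
  have hfactor : |((n : ℝ) - 1) * t / R| ≤ |(n : ℝ) - 1| * (2 * s) := by
    rw [abs_div, abs_mul, abs_of_pos (by linarith : 0 < R)]
    exact (div_le_self (by positivity) hR).trans (by gcongr)
  have hU : UU α t z ≤ 3 * s ^ α := calc
    UU α t z ≤ (3 * s) ^ α := (UU_le_rpow_abs_add_abs hα₀ t z).trans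
      (Real.rpow_le_rpow (by positivity) (by linarith) hα₀)
    _ = 3 ^ α * s ^ α := Real.mul_rpow (by norm_num) hs
    _ ≤ 3 * s ^ α := by
      gcongr
      exact Real.rpow_le_self_of_one_le (by norm_num) hα₁
  have hpow : s * s ^ α ≤ s ^ (2 * α) := by
    rw [← Real.rpow_one_add' hs (by linarith)]
    exact Real.rpow_le_rpow_of_exponent_ge' hs hs₁ (by linarith) (by linarith)
  rw [abs_VV_sub_UU]
  calc |((n : ℝ) - 1) * t / R| * UU α t z ≤ |(n : ℝ) - 1| * (2 * s) * (3 * s ^ α) :=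
        mul_le_mul hfactor hU (UU_nonneg α t z) (by positivity)
    _ = 6 * |(n : ℝ) - 1| * (s * s ^ α) := by ring
    _ ≤ 6 * |(n : ℝ) - 1| * s ^ (2 * α) := by gcongr

lemma Real.sqrt_add_sq_sub_le {S d : ℝ} (hS : 0 ≤ S) (hd : 0 < d) :
    √(S + d ^ 2) - d ≤ S / (2 * d) := by
  have : √(S + d ^ 2) ≤ d + S / (2 * d) := by
    rw [Real.sqrt_le_left (by positivity)]
    have : (d + S / (2 * d)) ^ 2 = S + d ^ 2 + (S / (2 * d)) ^ 2 := by
      field_simp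
      ring
    nlinarith [sq_nonneg (S / (2 * d))]
  linarith

lemma abs_sub_sqrt_add_sub_sq_sub_le {S R x : ℝ} (hS : 0 ≤ S) (hx : 1 / 2 ≤ R - x) :
    |R - √(S + (x - R) ^ 2) - x| ≤ S := by
  have hle : R - x ≤ √(S + (R - x) ^ 2) := Real.le_sqrt_of_sq_le (by linarith)
  rw [sub_sq_comm, show R - √(S + (R - x) ^ 2) - x = (R - x) - √(S + (R - x) ^ 2) by ring,
    abs_sub_comm, abs_of_nonneg (sub_nonneg.2 hle)]
  calc √(S + (R - x) ^ 2) - (R - x) ≤ S / (2 * (R - x)) :=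
        Real.sqrt_add_sq_sub_le hS (by linarith)
    _ ≤ S := div_le_self hS (by linarith)

/-- Near the origin `v_R` matches `U(x_n, z)` to order `2α`:
`|v_R(x,z) - U(x_n,z)| ≤ C s^{2α}` in `B_s` for `s` small. -/
theorem stmt_17 (m : ℕ) (α R : ℝ) (hα : α ∈ Set.Ioo (0 : ℝ) 1) (hR : 1 ≤ R) :
    ∃ C > 0, ∃ s₀ > 0, ∀ s : ℝ, 0 < s → s ≤ s₀ →
      ∀ p : (Fin m → ℝ) × ℝ × ℝ,
        (∑ i, p.1 i ^ 2) + p.2.1 ^ 2 + p.2.2 ^ 2 < s ^ 2 →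
        |vR α m R p - UU α p.2.1 p.2.2| ≤ C * s ^ (2 * α) := by
  obtain ⟨hα₀, hα₁⟩ := hα
  refine ⟨6 * |((m + 1 : ℕ) : ℝ) - 1| + 1, by positivity, 1 / 2, by norm_num, ?_⟩
  rintro s hs hs₀ ⟨x', xn, z⟩ hp
  set S := ∑ i, x' i ^ 2
  have hS : 0 ≤ S := by positivity
  have hSs : S ≤ s ^ 2 := by nlinarith
  have hxn : |xn| ≤ s := (abs_lt_of_sq_lt_sq (by nlinarith) hs.le).le
  have hz : |z| ≤ s := (abs_lt_of_sq_lt_sq (by nlinarith) hs.le).le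
  set t := R - √(S + (xn - R) ^ 2)
  have htx : |t - xn| ≤ s ^ 2 :=
    (abs_sub_sqrt_add_sub_sq_sub_le hS (by linarith [le_abs_self xn])).trans hSs
  have ht : |t| ≤ 2 * s := by
    have := abs_sub_abs_le_abs_sub t xn
    nlinarith
  calc |VV α (m + 1) R t z - UU α xn z|
      ≤ |VV α (m + 1) R t z - UU α t z| + |UU α t z - UU α xn z| := abs_sub_le _ _ _
    _ ≤ 6 * |((m + 1 : ℕ) : ℝ) - 1| * s ^ (2 * α) + (s ^ 2) ^ α :=
        add_le_add (abs_VV_sub_UU_le _ hα₀.le hα₁.le hR (by linarith) ht hz)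
          ((abs_UU_sub_UU_le hα₀.le hα₁.le t xn z).trans
            (Real.rpow_le_rpow (abs_nonneg _) htx hα₀.le))
    _ = (6 * |((m + 1 : ℕ) : ℝ) - 1| + 1) * s ^ (2 * α) := by
        rw [← Real.rpow_natCast, ← Real.rpow_mul hs.le]
        push_cast
        ring
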